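/- arXiv:1205.5663 — 3 statements merged into one kernel-verified Lean document; each statement's English description precedes it below -/
import Mathlib

section
/- Let α and β be real algebraic numbers, each of degree at least three over ℚ, such that 1, α, β are linearly independent over ℚ. Then for every k > 1 and every s > 2, lim_{N→∞} log(Z_N(α, β, s))/(s N^k) = 0; that is, (α, β) has a k-free energy limit equal to zero for every k > 1. -/
/-!
Every product `A^I` of length `N` has integer entries of size at most `2^N` and determinant `1`,
so `M*A^I = p + qα + rβ` for a nonzero integer vector `(p, q, r)` (the last column of `A^I`) of
height at most `2^N`. Linear independence of `1, α, β` over `ℚ` makes this number nonzero, and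
Liouville's inequality (a nonzero algebraic integer has norm at least `1`) bounds it below by
`c / 2^(N D)`, while it is trivially at most `C 2^N`. Hence each of the `2^N` terms of `Z_N` lies
between `e^(-O(N))` and `e^(O(N))`, so `log Z_N = O(N) = o(N^k)` for `k > 1`.
-/

open Matrix Filter

noncomputable section

/-- The matrix `A₀` with rows (0,0,1), (1,0,−1), (0,1,0). -/
def A0 : Matrix (Fin 3) (Fin 3) ℝ := !![0,0,1; 1,0,-1; 0,1,0]

/-- The matrix `A₁` with rows (1,0,0), (0,1,0), (−1,0,1). -/
def A1 : Matrix (Fin 3) (Fin 3) ℝ := !![1,0,0; 0,1,0; -1,0,1]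

/-- `Amat 0 = A₀`, `Amat 1 = A₁`. -/
def Amat : Fin 2 → Matrix (Fin 3) (Fin 3) ℝ := ![A0, A1]

/-- The matrix `M` with rows (0,0,1), (0,0,α), (0,0,β). -/
def Mmat (α β : ℝ) : Matrix (Fin 3) (Fin 3) ℝ := !![0,0,1; 0,0,α; 0,0,β]

/-- Hilbert–Schmidt (Hadamard) product `A*B = Tr(A Bᵀ)`. -/
def HS (A B : Matrix (Fin 3) (Fin 3) ℝ) : ℝ := (A * Bᵀ).trace

/-- `A^I = A_{σ₁} A_{σ₂} ⋯ A_{σ_N}` for a state `I = (σ₁,…,σ_N) ∈ {0,1}^N`. -/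
def AI {N : ℕ} (I : Fin N → Fin 2) : Matrix (Fin 3) (Fin 3) ℝ :=
  (List.ofFn fun i => Amat (I i)).prod

/-- The partition function `Z_N(α, β, s) = Σ_{I ∈ 𝒮_N} 1/|M*A^I|^s`. -/
def Z (N : ℕ) (α β s : ℝ) : ℝ :=
  ∑ I : Fin N → Fin 2, 1 / |HS (Mmat α β) (AI I)| ^ s

open Real

theorem one_le_prod_norm_algHom_of_isIntegral {K : Type*} [Field K] [Algebra ℚ K]
    [FiniteDimensional ℚ K] {η : K} (hη : IsIntegral ℤ η) (h0 : η ≠ 0) :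
    1 ≤ ∏ σ : K →ₐ[ℚ] ℂ, ‖σ η‖ := by
  obtain ⟨m, hm⟩ := IsIntegrallyClosed.isIntegral_iff.mp (Algebra.isIntegral_norm ℚ hη)
  have hm0 : m ≠ 0 := by
    rintro rfl
    exact h0 (by simpa using hm.symm)
  calc (1 : ℝ) ≤ |(m : ℝ)| := mod_cast Int.one_le_abs hm0
    _ = ‖((Algebra.norm ℚ η : ℚ) : ℂ)‖ := by rw [← hm]; simp
    _ = ∏ σ : K →ₐ[ℚ] ℂ, ‖σ η‖ := by
        rw [← norm_prod, ← Algebra.norm_eq_prod_embeddings ℚ ℂ η]; rfl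

theorem one_le_norm_mul_pow_of_isIntegral {K : Type*} [Field K] [Algebra ℚ K]
    [FiniteDimensional ℚ K] {η : K} (hη : IsIntegral ℤ η) (h0 : η ≠ 0) (σ₀ : K →ₐ[ℚ] ℂ)
    {C : ℝ} (hC : ∀ σ : K →ₐ[ℚ] ℂ, ‖σ η‖ ≤ C) :
    1 ≤ ‖σ₀ η‖ * C ^ (Fintype.card (K →ₐ[ℚ] ℂ) - 1) := by
  classical
  calc (1 : ℝ) ≤ ∏ σ : K →ₐ[ℚ] ℂ, ‖σ η‖ := one_le_prod_norm_algHom_of_isIntegral hη h0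
    _ = ‖σ₀ η‖ * ∏ σ ∈ Finset.univ.erase σ₀, ‖σ η‖ :=
        (Finset.mul_prod_erase _ _ (Finset.mem_univ σ₀)).symm
    _ ≤ ‖σ₀ η‖ * ∏ _σ ∈ Finset.univ.erase σ₀, C := by gcongr with σ; exact hC σ
    _ = ‖σ₀ η‖ * C ^ (Fintype.card (K →ₐ[ℚ] ℂ) - 1) := by
        rw [Finset.prod_const, Finset.card_erase_of_mem (Finset.mem_univ σ₀), Finset.card_univ]

theorem norm_sum_zsmul_le {ι E : Type*} [Fintype ι] [SeminormedAddCommGroup E] (a : ι → ℤ)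
    (v : ι → E) {H : ℝ} (ha : ∀ i, |(a i : ℝ)| ≤ H) :
    ‖∑ i, a i • v i‖ ≤ H * ∑ i, ‖v i‖ := by
  rw [Finset.mul_sum]
  refine (norm_sum_le _ _).trans (Finset.sum_le_sum fun i _ => ?_)
  exact (norm_zsmul_le _ _).trans (by rw [Int.norm_eq_abs]; gcongr; exact ha i)

open IntermediateField in
theorem exists_pos_div_pow_le_abs_sum_zsmul {ι : Type*} [Fintype ι] (x : ι → ℝ)
    (hx : ∀ i, IsAlgebraic ℚ (x i)) :
    ∃ c > 0, ∃ D : ℕ, ∀ (a : ι → ℤ) (H : ℝ), 1 ≤ H → (∀ i, |(a i : ℝ)| ≤ H) →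
      ∑ i, a i • x i ≠ 0 → c / H ^ D ≤ |∑ i, a i • x i| := by
  classical
  let K := adjoin ℚ (Set.range x)
  have : FiniteDimensional ℚ K :=
    finiteDimensional_adjoin (by rintro _ ⟨i, rfl⟩; exact (hx i).isIntegral)
  let y : ι → K := fun i => ⟨x i, subset_adjoin ℚ _ ⟨i, rfl⟩⟩
  obtain ⟨n, hn0, hn⟩ := exists_integral_multiples ℤ ℚ (Finset.univ.image y)
  let σ₀ : K →ₐ[ℚ] ℂ := (Complex.ofRealAm.restrictScalars ℚ).comp K.val
  let B : ℝ := ∑ σ : K →ₐ[ℚ] ℂ, ∑ i, ‖σ (n • y i)‖ + 1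
  refine ⟨1 / (|(n : ℝ)| * B ^ (Fintype.card (K →ₐ[ℚ] ℂ) - 1)), by positivity,
    Fintype.card (K →ₐ[ℚ] ℂ) - 1, fun a H hH ha hξ => ?_⟩
  -- `η = n ξ` is an algebraic integer whose conjugates are all `O(H)`.
  let η : K := ∑ i, a i • n • y i
  have hσ₀η : σ₀ η = ((n • ∑ i, a i • x i : ℝ) : ℂ) := by
    simp only [η, map_sum, map_zsmul, Finset.smul_sum]
    push_cast
    exact Finset.sum_congr rfl fun i _ => smul_comm _ _ _
  have hη0 : η ≠ 0 := by
    intro h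
    rw [h, map_zero, eq_comm, Complex.ofReal_eq_zero] at hσ₀η
    exact smul_ne_zero hn0 hξ hσ₀η
  have hηint : IsIntegral ℤ η :=
    IsIntegral.sum _ fun i _ => (hn _ (Finset.mem_image_of_mem y (Finset.mem_univ i))).zsmul _
  have hbound : ∀ σ : K →ₐ[ℚ] ℂ, ‖σ η‖ ≤ H * B := by
    intro σ
    calc ‖σ η‖ = ‖∑ i, a i • σ (n • y i)‖ := by simp only [η, map_sum, map_zsmul]
      _ ≤ H * ∑ i, ‖σ (n • y i)‖ := norm_sum_zsmul_le a _ ha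
      _ ≤ H * B := by
          gcongr
          exact (Finset.single_le_sum (f := fun τ : K →ₐ[ℚ] ℂ => ∑ i, ‖τ (n • y i)‖)
            (fun _ _ => by positivity) (Finset.mem_univ σ)).trans
            (le_add_of_nonneg_right zero_le_one)
  have key := one_le_norm_mul_pow_of_isIntegral hηint hη0 σ₀ hbound
  rw [hσ₀η, Complex.norm_real, Real.norm_eq_abs, zsmul_eq_mul, abs_mul, mul_pow] at key
  rw [div_div, div_le_iff₀ (by positivity)]
  linarith

theorem sum_zsmul_ne_zero {ι M : Type*} [Fintype ι] [AddCommGroup M] [Module ℚ M] {x : ι → M}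
    (hx : LinearIndependent ℚ x) {a : ι → ℤ} (ha : a ≠ 0) : ∑ i, a i • x i ≠ 0 := fun h =>
  ha (funext (Fintype.linearIndependent_iff.mp (hx.restrict_scalars' ℤ) a h))

theorem abs_list_prod_apply_le {n R : Type*} [Fintype n] [DecidableEq n] [Ring R] [LinearOrder R]
    [IsStrictOrderedRing R] {c : R} (L : List (Matrix n n R))
    (hL : ∀ A ∈ L, ∀ i, ∑ j, |A i j| ≤ c) (i j : n) : |L.prod i j| ≤ c ^ L.length := by
  induction L generalizing i with
  | nil => by_cases h : i = j <;> simp [one_apply, h]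
  | cons A L ih =>
    have hA : ∑ k, |A i k| ≤ c := hL A List.mem_cons_self i
    have hc : 0 ≤ c := (Finset.sum_nonneg fun k _ => abs_nonneg (A i k)).trans hA
    calc |(A * L.prod) i j| ≤ ∑ k, |A i k| * |L.prod k j| := by
          rw [mul_apply]; exact (Finset.abs_sum_le_sum_abs _ _).trans_eq (by simp [abs_mul])
      _ ≤ ∑ k, |A i k| * c ^ L.length := by
          gcongr with k; exact ih (fun B hB => hL B (List.mem_cons_of_mem _ hB)) k
      _ ≤ c ^ (A :: L).length := by
          rw [← Finset.sum_mul, List.length_cons, pow_succ']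
          exact mul_le_mul_of_nonneg_right hA (pow_nonneg hc _)

def Amatℤ : Fin 2 → Matrix (Fin 3) (Fin 3) ℤ :=
  ![!![0,0,1; 1,0,-1; 0,1,0], !![1,0,0; 0,1,0; -1,0,1]]

def AIℤ {N : ℕ} (I : Fin N → Fin 2) : Matrix (Fin 3) (Fin 3) ℤ :=
  (List.ofFn fun i => Amatℤ (I i)).prod

theorem Amat_eq_map (σ : Fin 2) : Amat σ = (Amatℤ σ).map (Int.cast : ℤ → ℝ) := by
  ext i j
  fin_cases σ <;> fin_cases i <;> fin_cases j <;> simp [Amat, Amatℤ, A0, A1]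

theorem AI_eq_map {N : ℕ} (I : Fin N → Fin 2) : AI I = (AIℤ I).map (Int.cast : ℤ → ℝ) := by
  change _ = (Int.castRingHom ℝ).mapMatrix (AIℤ I)
  simp only [AI, AIℤ, map_list_prod, List.map_ofFn, Function.comp_def, RingHom.mapMatrix_apply,
    Amat_eq_map]
  rfl

theorem det_Amatℤ (σ : Fin 2) : (Amatℤ σ).det = 1 := by
  fin_cases σ <;> simp [Amatℤ, det_fin_three]

theorem sum_abs_Amatℤ_le (σ : Fin 2) (i : Fin 3) : ∑ j, |Amatℤ σ i j| ≤ 2 := by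
  fin_cases σ <;> fin_cases i <;> simp [Amatℤ, Fin.sum_univ_three]

theorem det_AIℤ {N : ℕ} (I : Fin N → Fin 2) : (AIℤ I).det = 1 := by
  rw [AIℤ, ← coe_detMonoidHom, map_list_prod, List.map_ofFn]
  refine List.prod_eq_one fun d hd => ?_
  obtain ⟨i, rfl⟩ := (List.mem_ofFn' _ _).mp hd
  exact det_Amatℤ (I i)

theorem abs_AIℤ_apply_le {N : ℕ} (I : Fin N → Fin 2) (i j : Fin 3) : |AIℤ I i j| ≤ 2 ^ N := by
  have := abs_list_prod_apply_le (c := 2) (List.ofFn fun i => Amatℤ (I i)) ?_ i j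
  · rwa [List.length_ofFn] at this
  intro A hA k
  obtain ⟨l, rfl⟩ := (List.mem_ofFn' _ _).mp hA
  exact sum_abs_Amatℤ_le (I l) k

theorem AIℤ_col_ne_zero {N : ℕ} (I : Fin N → Fin 2) (j : Fin 3) : (fun i => AIℤ I i j) ≠ 0 := by
  intro h
  have := det_AIℤ I
  rw [det_eq_zero_of_column_eq_zero j fun i => congrFun h i] at this
  exact zero_ne_one this

theorem HS_Mmat_AI_eq_sum (α β : ℝ) {N : ℕ} (I : Fin N → Fin 2) :
    HS (Mmat α β) (AI I) = ∑ i, AIℤ I i 2 • ![1, α, β] i := by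
  simp [HS, Mmat, AI_eq_map, trace, vecMul, dotProduct, Fin.sum_univ_three]
  ring

theorem HS_Mmat_AI_ne_zero {α β : ℝ} (hli : LinearIndependent ℚ ![(1 : ℝ), α, β]) {N : ℕ}
    (I : Fin N → Fin 2) : HS (Mmat α β) (AI I) ≠ 0 := by
  rw [HS_Mmat_AI_eq_sum]
  exact sum_zsmul_ne_zero hli (AIℤ_col_ne_zero I 2)

theorem abs_log_le_of_div_pow_le_of_le_mul {y c C H : ℝ} {D : ℕ} (hc : 0 < c) (hH : 1 ≤ H)
    (hlow : c / H ^ D ≤ y) (hup : y ≤ C * H) :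
    |log y| ≤ |log c| + |log C| + (D + 1) * log H := by
  have hH0 : 0 < H := zero_lt_one.trans_le hH
  have hy : 0 < y := (by positivity : 0 < c / H ^ D).trans_le hlow
  have hC : 0 < C := pos_of_mul_pos_left (hy.trans_le hup) hH0.le
  have hlow' : log c - D * log H ≤ log y := by
    rw [← log_pow, ← log_div hc.ne' (by positivity)]; exact log_le_log (by positivity) hlow
  have hup' : log y ≤ log C + log H := by
    rw [← log_mul hC.ne' hH0.ne']; exact log_le_log hy hup
  have hlogH : 0 ≤ log H := log_nonneg hH
  rw [abs_le]
  constructor <;> nlinarith [neg_abs_le (log c), le_abs_self (log C), abs_nonneg (log c),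
    abs_nonneg (log C)]

theorem abs_log_sum_one_div_rpow_le {ι : Type*} [Fintype ι] [Nonempty ι] (h : ι → ℝ) {s t : ℝ}
    (hs : 0 ≤ s) (h0 : ∀ i, h i ≠ 0) (ht : ∀ i, |log (|h i|)| ≤ t) :
    |log (∑ i, 1 / |h i| ^ s)| ≤ log (Fintype.card ι) + s * t := by
  have hterm : ∀ i, 1 / |h i| ^ s = exp (-(s * log |h i|)) := fun i => by
    rw [rpow_def_of_pos (abs_pos.mpr (h0 i)), one_div, ← exp_neg, mul_comm]
  have hlow : ∀ i, exp (-(s * t)) ≤ 1 / |h i| ^ s := fun i => by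
    rw [hterm]; gcongr; exact (le_abs_self _).trans (ht i)
  have hup : ∀ i, 1 / |h i| ^ s ≤ exp (s * t) := fun i => by
    rw [hterm, exp_le_exp, neg_le, ← mul_neg]; gcongr; linarith [abs_le.mp (ht i)]
  obtain ⟨i₀⟩ := ‹Nonempty ι›
  have hsum_low : exp (-(s * t)) ≤ ∑ i, 1 / |h i| ^ s := (hlow i₀).trans
    (Finset.single_le_sum (fun i _ => (exp_pos _).le.trans (hlow i)) (Finset.mem_univ i₀))
  have hsum_pos : 0 < ∑ i, 1 / |h i| ^ s := (exp_pos _).trans_le hsum_low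
  have hsum_up : ∑ i, 1 / |h i| ^ s ≤ Fintype.card ι * exp (s * t) := by
    simpa using Finset.sum_le_sum fun i (_ : i ∈ Finset.univ) => hup i
  have hcard : 0 ≤ log (Fintype.card ι) := log_nonneg (mod_cast Fintype.card_pos)
  rw [abs_le]
  constructor
  · linarith [(le_log_iff_exp_le hsum_pos).mpr hsum_low]
  · calc log (∑ i, 1 / |h i| ^ s) ≤ log (Fintype.card ι * exp (s * t)) :=
          log_le_log hsum_pos hsum_up
      _ = log (Fintype.card ι) + s * t := by rw [log_mul (by positivity) (exp_pos _).ne', log_exp]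

theorem tendsto_div_mul_rpow_of_abs_le_linear {f : ℕ → ℝ} {a b k : ℝ} (s : ℝ) (hk : 1 < k)
    (hf : ∀ N, |f N| ≤ a + b * N) :
    Tendsto (fun N : ℕ => f N / (s * (N : ℝ) ^ k)) atTop (nhds 0) := by
  have hpow : Tendsto (fun N : ℕ => (N : ℝ) ^ (1 - k)) atTop (nhds 0) := by
    have := (tendsto_rpow_neg_atTop (by linarith : 0 < k - 1)).comp tendsto_natCast_atTop_atTop
    simpa [Function.comp_def] using this
  have hmain : Tendsto (fun N : ℕ => f N / (N : ℝ) ^ k) atTop (nhds 0) := by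
    refine squeeze_zero_norm' ?_ (by simpa using hpow.const_mul (|a| + |b|))
    filter_upwards [eventually_ge_atTop 1] with N hN
    have hN : (1 : ℝ) ≤ N := mod_cast hN
    have hNk : 0 < (N : ℝ) ^ k := by positivity
    rw [norm_div, Real.norm_eq_abs, Real.norm_eq_abs, abs_of_pos hNk, div_le_iff₀ hNk, mul_assoc,
      ← rpow_add (by positivity), sub_add_cancel, rpow_one]
    nlinarith [hf N, le_abs_self a, le_abs_self b, abs_nonneg a, abs_nonneg b]
  simpa [div_mul_eq_div_div_swap] using hmain.div_const s

theorem algebraic_pair_k_free_energy_limit_zero_general (α β : ℝ)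
    (hα : IsAlgebraic ℚ α) (hβ : IsAlgebraic ℚ β)
    (hli : LinearIndependent ℚ ![(1 : ℝ), α, β]) :
    ∀ k : ℝ, 1 < k → ∀ s : ℝ, 2 < s →
      Filter.Tendsto (fun N : ℕ => Real.log (Z N α β s) / (s * (N : ℝ) ^ k))
        Filter.atTop (nhds 0) := by
  intro k hk s hs
  obtain ⟨c, hc, D, hliouville⟩ := exists_pos_div_pow_le_abs_sum_zsmul ![(1 : ℝ), α, β]
    (Fin.forall_fin_succ.mpr ⟨isAlgebraic_one, Fin.forall_fin_two.mpr ⟨hα, hβ⟩⟩)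
  let C := ∑ i, ‖![(1 : ℝ), α, β] i‖
  have hterm : ∀ N (I : Fin N → Fin 2),
      |log (|HS (Mmat α β) (AI I)|)| ≤ |log c| + |log C| + (D + 1) * (N * log 2) := by
    intro N I
    have h2N : (1 : ℝ) ≤ 2 ^ N := one_le_pow₀ one_le_two
    have ha : ∀ i, |(AIℤ I i 2 : ℝ)| ≤ 2 ^ N := fun i => mod_cast abs_AIℤ_apply_le I i 2
    have hne := HS_Mmat_AI_ne_zero hli I
    rw [HS_Mmat_AI_eq_sum] at hne ⊢
    rw [← log_pow]
    refine abs_log_le_of_div_pow_le_of_le_mul hc h2N (hliouville _ _ h2N ha hne) ?_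
    rw [mul_comm]
    exact norm_sum_zsmul_le (E := ℝ) _ _ ha
  refine tendsto_div_mul_rpow_of_abs_le_linear (a := s * (|log c| + |log C|))
    (b := log 2 + s * ((D + 1) * log 2)) s hk fun N => ?_
  have hZ := abs_log_sum_one_div_rpow_le (s := s) _ (by linarith) (HS_Mmat_AI_ne_zero hli)
    (hterm N)
  rw [Fintype.card_fun, Fintype.card_fin, Fintype.card_fin, Nat.cast_pow, Nat.cast_ofNat,
    log_pow] at hZ
  exact hZ.trans_eq (by ring)

/-- If `α` and `β` are real algebraic numbers of degree at least three over `ℚ`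
such that `1, α, β` are linearly independent over `ℚ`, then the pair `(α, β)` has
`k`-free energy limit equal to zero for every `k > 1` (taking `s > 2`). -/
theorem algebraic_pair_k_free_energy_limit_zero (α β : ℝ)
    (hα : IsAlgebraic ℚ α) (hβ : IsAlgebraic ℚ β)
    (hdegα : 3 ≤ (minpoly ℚ α).natDegree) (hdegβ : 3 ≤ (minpoly ℚ β).natDegree)
    (hli : LinearIndependent ℚ ![(1 : ℝ), α, β]) :
    ∀ k : ℝ, 1 < k → ∀ s : ℝ, 2 < s →
      Filter.Tendsto (fun N : ℕ => Real.log (Z N α β s) / (s * (N : ℝ) ^ k))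
        Filter.atTop (nhds 0) :=
  algebraic_pair_k_free_energy_limit_zero_general α β hα hβ hli

end
end

section
/- Let α be a real algebraic number of degree at least three over ℚ. Then for every k > 1 and every s > 2, lim_{N→∞} log(Z_N(α, α², s))/(s N^k) = 0; that is, the pair (α, α²) has a k-free energy limit equal to zero for every k > 1. -/
open Matrix Filter

noncomputable section

/-!
`M * A^I = p + q α + r α²`, where `(p, q, r)` is the last column of `A^I`. This column is an
integer vector; it is nonzero because `det A^I = 1`, and its entries are at most `2^N` in absolute
value because `A₀` and `A₁` have row-sum norm `2`. Liouville's inequality for `α` (the norm from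
`ℚ(α)` of a nonzero algebraic integer is a nonzero integer), applied to polynomials of degree
`2 < deg α`, gives `|p + q α + r α²| ≥ c 2^(-D N)`, while `|p + q α + r α²| ≤ C 2^N`. So each of
the `2^N` terms of `Z_N` has logarithm `O(N)`, hence `log Z_N = O(N) = o(N^k)` for `k > 1`.
-/

open IntermediateField Real Topology

theorem sum_intCast_mul_pow_ne_zero {L : Type*} [Ring L] [Algebra ℚ L] {x : L} {n : ℕ}
    (hn : n < (minpoly ℚ x).natDegree) {a : Fin (n + 1) → ℤ} (ha : a ≠ 0) :
    ∑ i, (a i : L) * x ^ (i : ℕ) ≠ 0 := by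
  intro h
  have hli := (linearIndependent_pow (K := ℚ) x).comp (Fin.castLE hn) (Fin.castLE_injective hn)
  refine ha (funext fun i => ?_)
  have := Fintype.linearIndependent_iff.1 hli (fun i => (a i : ℚ))
    (by simpa [Algebra.smul_def] using h) i
  exact_mod_cast this

theorem IsIntegral.pow_smul_sum_smul_pow {R A : Type*} [CommRing R] [CommRing A] [Algebra R A]
    {x : A} {m : R} (hx : IsIntegral R (m • x)) {n : ℕ} (a : Fin (n + 1) → R) :
    IsIntegral R (m ^ n • ∑ i, a i • x ^ (i : ℕ)) := by
  have hsum : m ^ n • ∑ i, a i • x ^ (i : ℕ) =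
      ∑ i : Fin (n + 1), (a i * m ^ (n - i)) • (m • x) ^ (i : ℕ) := by
    rw [Finset.smul_sum]
    refine Finset.sum_congr rfl fun i _ => ?_
    rw [smul_pow, smul_smul, smul_smul, mul_assoc, pow_sub_mul_pow m (Nat.lt_succ_iff.1 i.2),
      mul_comm]
  rw [hsum]
  exact IsIntegral.sum _ fun i _ => (hx.pow _).smul _

theorem norm_sum_mul_pow_le {𝕜 : Type*} [NormedRing 𝕜] [NormOneClass 𝕜] {n : ℕ}
    {a : Fin (n + 1) → 𝕜} {z : 𝕜} {H S : ℝ} (ha : ∀ i, ‖a i‖ ≤ H) (hz : ‖z‖ ≤ S) (hS : 1 ≤ S) :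
    ‖∑ i, a i * z ^ (i : ℕ)‖ ≤ (n + 1) * H * S ^ n := by
  have hH : 0 ≤ H := (norm_nonneg _).trans (ha 0)
  calc ‖∑ i, a i * z ^ (i : ℕ)‖ ≤ ∑ _i : Fin (n + 1), H * S ^ n := by
        refine norm_sum_le_of_le _ fun i _ => (norm_mul_le _ _).trans ?_
        refine mul_le_mul (ha i) ((norm_pow_le _ _).trans ?_) (norm_nonneg _) hH
        exact (pow_le_pow_left₀ (norm_nonneg _) hz _).trans
          (pow_le_pow_right₀ hS (Nat.lt_succ_iff.1 i.2))
    _ = (n + 1) * H * S ^ n := by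
        rw [Finset.sum_const, Finset.card_univ, Fintype.card_fin, nsmul_eq_mul]
        push_cast
        ring

theorem one_le_mul_pow_card_of_one_le_prod {ι : Type*} [Fintype ι] {f : ι → ℝ} {B : ℝ}
    (hf : ∀ i, 0 ≤ f i) (hfB : ∀ i, f i ≤ B) (hB : 1 ≤ B) (h : 1 ≤ ∏ i, f i) (j : ι) :
    1 ≤ f j * B ^ Fintype.card ι := by
  classical
  calc 1 ≤ ∏ i, f i := h
    _ = f j * ∏ i ∈ Finset.univ.erase j, f i :=
        (Finset.mul_prod_erase _ _ (Finset.mem_univ j)).symm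
    _ ≤ f j * ∏ _i ∈ Finset.univ.erase j, B :=
        mul_le_mul_of_nonneg_left (Finset.prod_le_prod (fun i _ => hf i) fun i _ => hfB i) (hf j)
    _ ≤ f j * B ^ Fintype.card ι := by
        rw [Finset.prod_const]
        exact mul_le_mul_of_nonneg_left (pow_le_pow_right₀ hB (Finset.card_le_univ _)) (hf j)

theorem NumberField.one_le_prod_norm_embeddings {K : Type*} [Field K] [NumberField K] {x : K}
    (hx : IsIntegral ℤ x) (h0 : x ≠ 0) : 1 ≤ ∏ σ : K →ₐ[ℚ] ℂ, ‖σ x‖ := by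
  obtain ⟨z, hz⟩ := IsIntegrallyClosed.isIntegral_iff.mp (Algebra.isIntegral_norm ℚ hx)
  have hz0 : z ≠ 0 := by
    rintro rfl
    exact Algebra.norm_ne_zero_iff.2 h0 (hz.symm.trans (map_zero _))
  calc (1 : ℝ) ≤ |(z : ℝ)| := by exact_mod_cast Int.one_le_abs hz0
    _ = ‖algebraMap ℚ ℂ (Algebra.norm ℚ x)‖ := by rw [← hz]; simp
    _ = ∏ σ : K →ₐ[ℚ] ℂ, ‖σ x‖ := by rw [Algebra.norm_eq_prod_embeddings, norm_prod]

theorem NumberField.exists_div_pow_le_norm_sum_mul_pow {K : Type*} [Field K] [NumberField K]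
    (θ : K) {n : ℕ} (hn : n < (minpoly ℚ θ).natDegree) (σ₀ : K →ₐ[ℚ] ℂ) :
    ∃ c > 0, ∃ D : ℕ, ∀ a : Fin (n + 1) → ℤ, a ≠ 0 → ∀ H : ℝ, 1 ≤ H → (∀ i, |(a i : ℝ)| ≤ H) →
      c / H ^ D ≤ ‖σ₀ (∑ i, (a i : K) * θ ^ (i : ℕ))‖ := by
  obtain ⟨m, hm0, hmθ⟩ := ((IsFractionRing.isAlgebraic_iff ℤ ℚ K).2
    (Algebra.IsAlgebraic.isAlgebraic θ)).exists_integral_multiple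
  obtain ⟨M, hM⟩ := Finite.exists_le fun σ : K →ₐ[ℚ] ℂ => ‖σ θ‖
  set S := max 1 M
  have hS1 : 1 ≤ S := le_max_left _ _
  have hθS (σ : K →ₐ[ℚ] ℂ) : ‖σ θ‖ ≤ S := (hM σ).trans (le_max_right _ _)
  have hm1 : 1 ≤ |(m : ℝ)| ^ n := one_le_pow₀ (by exact_mod_cast Int.one_le_abs hm0)
  set C : ℝ := |(m : ℝ)| ^ n * ((n + 1) * S ^ n)
  have hC1 : 1 ≤ C := one_le_mul_of_one_le_of_one_le hm1
    (one_le_mul_of_one_le_of_one_le (by linarith [(n.cast_nonneg : (0:ℝ) ≤ n)]) (one_le_pow₀ hS1))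
  refine ⟨(|(m : ℝ)| ^ n * C ^ Fintype.card (K →ₐ[ℚ] ℂ))⁻¹, by positivity,
    Fintype.card (K →ₐ[ℚ] ℂ), fun a ha H hH haH => ?_⟩
  set x := ∑ i, (a i : K) * θ ^ (i : ℕ)
  have hmx_int : IsIntegral ℤ ((m : K) ^ n * x) := by
    simpa [zsmul_eq_mul] using hmθ.pow_smul_sum_smul_pow a
  have hmx_ne : (m : K) ^ n * x ≠ 0 :=
    mul_ne_zero (pow_ne_zero _ (Int.cast_ne_zero.2 hm0)) (sum_intCast_mul_pow_ne_zero hn ha)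
  have hσ (σ : K →ₐ[ℚ] ℂ) : ‖σ ((m : K) ^ n * x)‖ ≤ C * H := by
    have := norm_sum_mul_pow_le (a := fun i => (a i : ℂ))
      (fun i => by rw [Complex.norm_intCast]; exact haH i) (hθS σ) hS1
    simp only [x, map_mul, map_pow, map_intCast, map_sum, norm_mul, norm_pow, Complex.norm_intCast]
    calc |(m : ℝ)| ^ n * ‖∑ i, (a i : ℂ) * σ θ ^ (i : ℕ)‖
        ≤ |(m : ℝ)| ^ n * ((n + 1) * H * S ^ n) := by gcongr
      _ = C * H := by ring
  have hnorm := one_le_mul_pow_card_of_one_le_prod (fun _ => norm_nonneg _) hσ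
    (one_le_mul_of_one_le_of_one_le hC1 hH)
    (NumberField.one_le_prod_norm_embeddings hmx_int hmx_ne) σ₀
  have hσ₀ : ‖σ₀ ((m : K) ^ n * x)‖ = |(m : ℝ)| ^ n * ‖σ₀ x‖ := by
    rw [map_mul, norm_mul, map_pow, map_intCast, norm_pow, Complex.norm_intCast]
  rw [hσ₀] at hnorm
  rw [← one_div, div_div, div_le_iff₀ (by positivity)]
  refine hnorm.trans_eq ?_
  rw [mul_pow]
  ring

theorem exists_div_pow_le_abs_sum_mul_pow {α : ℝ} (hα : IsAlgebraic ℚ α) {n : ℕ}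
    (hn : n < (minpoly ℚ α).natDegree) :
    ∃ c > 0, ∃ D : ℕ, ∀ a : Fin (n + 1) → ℤ, a ≠ 0 → ∀ H : ℝ, 1 ≤ H → (∀ i, |(a i : ℝ)| ≤ H) →
      c / H ^ D ≤ |∑ i, (a i : ℝ) * α ^ (i : ℕ)| := by
  have : FiniteDimensional ℚ ℚ⟮α⟯ := adjoin.finiteDimensional hα.isIntegral
  have : NumberField ℚ⟮α⟯ := ⟨⟩
  obtain ⟨c, hc, D, h⟩ := NumberField.exists_div_pow_le_norm_sum_mul_pow (AdjoinSimple.gen ℚ α)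
    (n := n) (by convert hn using 2; exact minpoly_gen ℚ α)
    ((Complex.ofRealAm.restrictScalars ℚ).comp (val _))
  refine ⟨c, hc, D, fun a ha H hH haH => (h a ha H hH haH).trans_eq ?_⟩
  rw [← Real.norm_eq_abs, ← Complex.norm_real]
  push_cast
  simp only [map_sum, map_mul, map_pow, map_intCast]
  rfl

theorem det_Amat (σ : Fin 2) : (Amat σ).det = 1 := by
  fin_cases σ <;> simp [Amat, A0, A1, Matrix.det_fin_three]

theorem det_AI {N : ℕ} (I : Fin N → Fin 2) : (AI I).det = 1 := by
  rw [AI, ← Matrix.coe_detMonoidHom, map_list_prod, List.map_ofFn]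
  exact List.prod_eq_one (by simp [det_Amat])

section
attribute [local instance] Matrix.linftyOpNormedAddCommGroup Matrix.linftyOpNormedRing

theorem norm_Amat_le (σ : Fin 2) : ‖Amat σ‖ ≤ 2 := by
  rw [Matrix.linfty_opNorm_def]
  norm_cast
  apply Finset.sup_le
  intro i _
  fin_cases σ <;> fin_cases i <;> simp [Amat, A0, A1, Fin.sum_univ_three] <;> norm_num

theorem norm_AI_le {N : ℕ} (I : Fin N → Fin 2) : ‖AI I‖ ≤ 2 ^ N := by
  refine (List.norm_prod_le _).trans ?_
  rw [List.map_ofFn, List.prod_ofFn]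
  calc ∏ i, ‖Amat (I i)‖ ≤ ∏ _i : Fin N, (2:ℝ) :=
        Finset.prod_le_prod (fun _ _ => norm_nonneg _) fun i _ => norm_Amat_le (I i)
    _ = 2 ^ N := by simp

theorem Matrix.abs_apply_le_linfty_opNorm {m n : Type*} [Fintype m] [Fintype n]
    (A : Matrix m n ℝ) (i : m) (j : n) : |A i j| ≤ ‖A‖ := by
  rw [Matrix.linfty_opNorm_def, ← Real.norm_eq_abs, ← coe_nnnorm, NNReal.coe_le_coe]
  exact (Finset.single_le_sum (fun _ _ => zero_le) (Finset.mem_univ j)).trans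
    (Finset.le_sup (f := fun i => ∑ j, ‖A i j‖₊) (Finset.mem_univ i))
end

theorem Amat_mem_range (σ : Fin 2) : Amat σ ∈ (Int.castRingHom ℝ).mapMatrix.range := by
  fin_cases σ
  · exact ⟨!![0,0,1; 1,0,-1; 0,1,0], by ext i j; fin_cases i <;> fin_cases j <;> simp [Amat, A0]⟩
  · exact ⟨!![1,0,0; 0,1,0; -1,0,1], by ext i j; fin_cases i <;> fin_cases j <;> simp [Amat, A1]⟩

theorem AI_mem_range {N : ℕ} (I : Fin N → Fin 2) : AI I ∈ (Int.castRingHom ℝ).mapMatrix.range :=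
  Subring.list_prod_mem _ (List.forall_mem_ofFn_iff.2 fun i => Amat_mem_range (I i))

theorem HS_Mmat (α β : ℝ) (A : Matrix (Fin 3) (Fin 3) ℝ) :
    HS (Mmat α β) A = A 0 2 + α * A 1 2 + β * A 2 2 := by
  simp [HS, Mmat, Matrix.trace, Matrix.vecMul, dotProduct, Fin.sum_univ_three]

theorem abs_log_le_of_div_pow_le_of_le_mul_pow {x c C r : ℝ} {D N : ℕ} (hc : 0 < c) (hC : 0 < C)
    (hr : 1 ≤ r) (hlo : c / (r ^ N) ^ D ≤ x) (hhi : x ≤ C * r ^ N) :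
    |log x| ≤ |log c| + |log C| + (D + 1) * log r * N := by
  have hr0 : 0 < r := one_pos.trans_le hr
  have hlogr : 0 ≤ log r := log_nonneg hr
  have h_lo := log_le_log (by positivity) hlo
  have h_hi := log_le_log ((by positivity : 0 < c / (r ^ N) ^ D).trans_le hlo) hhi
  rw [log_div hc.ne' (by positivity), ← pow_mul, log_pow] at h_lo
  rw [log_mul hC.ne' (by positivity), log_pow] at h_hi
  push_cast at h_lo
  have hND : 0 ≤ N * D * log r := by positivity
  have hN : 0 ≤ N * log r := by positivity
  rw [abs_le]
  constructor <;> linarith [neg_abs_le (log c), le_abs_self (log C), abs_nonneg (log c),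
    abs_nonneg (log C)]

theorem abs_log_sum_le {ι : Type*} {s : Finset ι} (hs : s.Nonempty) {f : ι → ℝ} {L : ℝ}
    (hf : ∀ i ∈ s, 0 < f i) (hL : ∀ i ∈ s, |log (f i)| ≤ L) :
    |log (∑ i ∈ s, f i)| ≤ L + log s.card := by
  obtain ⟨j, hj⟩ := hs
  have hsum : 0 < ∑ i ∈ s, f i := Finset.sum_pos hf ⟨j, hj⟩
  have hcard : (1 : ℝ) ≤ s.card := by exact_mod_cast Finset.card_pos.2 ⟨j, hj⟩
  have hlogcard : 0 ≤ log s.card := log_nonneg hcard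
  rw [abs_le]
  constructor
  · have := log_le_log (hf j hj) (Finset.single_le_sum (fun i hi => (hf i hi).le) hj)
    linarith [neg_abs_le (log (f j)), hL j hj]
  · have hle : ∑ i ∈ s, f i ≤ s.card * exp L := by
      rw [← nsmul_eq_mul, ← Finset.sum_const]
      exact Finset.sum_le_sum fun i hi =>
        (log_le_iff_le_exp (hf i hi)).1 ((le_abs_self _).trans (hL i hi))
    have := log_le_log hsum hle
    rw [log_mul (one_pos.trans_le hcard).ne' (exp_pos L).ne', log_exp] at this
    linarith

theorem tendsto_div_mul_rpow_of_abs_le {f : ℕ → ℝ} {a b k : ℝ} (hf : ∀ N, |f N| ≤ a + b * N)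
    (hk : 1 < k) (s : ℝ) : Tendsto (fun N : ℕ => f N / (s * (N : ℝ) ^ k)) atTop (𝓝 0) := by
  have hbound :
      Tendsto (fun N : ℕ => a * (N : ℝ) ^ (-k) + b * (N : ℝ) ^ (-(k - 1))) atTop (𝓝 0) := by
    have h1 := (tendsto_rpow_neg_atTop (by linarith : 0 < k)).comp tendsto_natCast_atTop_atTop
    have h2 := (tendsto_rpow_neg_atTop (by linarith : 0 < k - 1)).comp tendsto_natCast_atTop_atTop
    simpa using (h1.const_mul a).add (h2.const_mul b)
  have hfk : Tendsto (fun N : ℕ => f N / (N : ℝ) ^ k) atTop (𝓝 0) := by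
    refine squeeze_zero_norm' ?_ hbound
    filter_upwards [eventually_gt_atTop 0] with N hN
    have hN : (0 : ℝ) < N := by exact_mod_cast hN
    rw [norm_div, Real.norm_eq_abs, Real.norm_eq_abs, abs_of_pos (rpow_pos_of_pos hN k),
      div_le_iff₀ (rpow_pos_of_pos hN k), add_mul, mul_assoc, mul_assoc, ← rpow_add hN,
      ← rpow_add hN, neg_add_cancel, rpow_zero, neg_sub, sub_add_cancel, rpow_one, mul_one]
    exact hf N
  simpa using (hfk.const_mul s⁻¹).congr fun N => by ring

theorem exists_HS_eq_sum_intCast_mul_pow (α : ℝ) {N : ℕ} (I : Fin N → Fin 2) :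
    ∃ a : Fin 3 → ℤ, a ≠ 0 ∧ (∀ i, |(a i : ℝ)| ≤ 2 ^ N) ∧
      HS (Mmat α (α ^ 2)) (AI I) = ∑ i, (a i : ℝ) * α ^ (i : ℕ) := by
  obtain ⟨B, hB⟩ := AI_mem_range I
  have hcol (i : Fin 3) : (B i 2 : ℝ) = AI I i 2 := by rw [← hB]; rfl
  refine ⟨fun i => B i 2, fun h0 => ?_, fun i => ?_, ?_⟩
  · have : (AI I).det = 0 := Matrix.det_eq_zero_of_column_eq_zero 2 fun i => by
      rw [← hcol, congrFun h0 i, Pi.zero_apply, Int.cast_zero]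
    exact one_ne_zero ((det_AI I).symm.trans this)
  · rw [hcol]
    exact (Matrix.abs_apply_le_linfty_opNorm _ i 2).trans (norm_AI_le I)
  · simp only [HS_Mmat, hcol, Fin.sum_univ_three, Fin.val_zero, Fin.val_one, Fin.val_two,
      pow_zero, pow_one]
    ring

theorem exists_forall_abs_log_abs_HS_le {α : ℝ} (hα : IsAlgebraic ℚ α)
    (hdeg : 3 ≤ (minpoly ℚ α).natDegree) :
    ∃ A B : ℝ, ∀ (N : ℕ) (I : Fin N → Fin 2),
      0 < |HS (Mmat α (α ^ 2)) (AI I)| ∧ |log (|HS (Mmat α (α ^ 2)) (AI I)|)| ≤ A + B * N := by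
  obtain ⟨c, hc, D, hliou⟩ := exists_div_pow_le_abs_sum_mul_pow hα (n := 2) hdeg
  set S := max 1 ‖α‖
  refine ⟨|log c| + |log (3 * S ^ 2)|, (D + 1) * log 2, fun N I => ?_⟩
  obtain ⟨a, ha, haH, hHS⟩ := exists_HS_eq_sum_intCast_mul_pow α I
  have hlo : c / (2 ^ N) ^ D ≤ |HS (Mmat α (α ^ 2)) (AI I)| :=
    hHS ▸ hliou a ha _ (one_le_pow₀ one_le_two) haH
  have hhi : |HS (Mmat α (α ^ 2)) (AI I)| ≤ 3 * S ^ 2 * 2 ^ N := by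
    rw [hHS, ← Real.norm_eq_abs]
    exact (norm_sum_mul_pow_le haH (le_max_right _ _) (le_max_left _ _)).trans_eq (by ring)
  refine ⟨(by positivity : 0 < c / ((2 : ℝ) ^ N) ^ D).trans_le hlo, ?_⟩
  exact (abs_log_le_of_div_pow_le_of_le_mul_pow hc (by positivity) one_le_two hlo hhi).trans_eq
    (by ring)

/-- If `α` is a real algebraic number of degree at least three over `ℚ`, then the
pair `(α, α²)` has `k`-free energy limit equal to zero for every `k > 1`
(taking `s > 2`). -/
theorem algebraic_square_pair_k_free_energy_limit_zero (α : ℝ)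
    (hα : IsAlgebraic ℚ α) (hdeg : 3 ≤ (minpoly ℚ α).natDegree) :
    ∀ k : ℝ, 1 < k → ∀ s : ℝ, 2 < s →
      Filter.Tendsto (fun N : ℕ => Real.log (Z N α (α ^ 2) s) / (s * (N : ℝ) ^ k))
        Filter.atTop (nhds 0) := by
  intro k hk s hs
  obtain ⟨A, B, hHS⟩ := exists_forall_abs_log_abs_HS_le hα hdeg
  refine tendsto_div_mul_rpow_of_abs_le (a := s * A) (b := s * B + log 2) (fun N => ?_) hk s
  have hs0 : 0 < s := by linarith
  have hterm (I : Fin N → Fin 2) : |log (1 / |HS (Mmat α (α ^ 2)) (AI I)| ^ s)| =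
      s * |log (|HS (Mmat α (α ^ 2)) (AI I)|)| := by
    rw [one_div, log_inv, log_rpow (hHS N I).1, abs_neg, abs_mul, abs_of_pos hs0]
  calc |log (Z N α (α ^ 2) s)|
      ≤ s * (A + B * N) + log (Finset.univ : Finset (Fin N → Fin 2)).card :=
        abs_log_sum_le Finset.univ_nonempty (fun I _ => by have := (hHS N I).1; positivity)
          fun I _ => (hterm I).trans_le (mul_le_mul_of_nonneg_left (hHS N I).2 hs0.le)
    _ = s * A + (s * B + log 2) * N := by
        simp only [Finset.card_univ, Fintype.card_fun, Fintype.card_fin]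
        push_cast
        rw [log_pow]
        ring

end
end

section
/- Let (α, β) ∈ △ have non-terminating triangle sequence (a₀, a₁, …), and for k ≥ 0 set N_k = a₀ + a₁ + ⋯ + a_k + (k+1). Then for every s > 0 and every k ≥ 0, Z_{N_k}(α, β, s) ≥ (x_{k+1})^s. -/
open Matrix Filter

noncomputable section

/-- The triangle `△ = {(x,y) : 1 ≥ x ≥ y > 0}`. -/
def tri : Set (ℝ × ℝ) := {p | 1 ≥ p.1 ∧ p.1 ≥ p.2 ∧ p.2 > 0}

/-- The subtriangle `△_k = {(x,y) ∈ △ : 1 − x − ky ≥ 0 > 1 − x − (k+1)y}`. -/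
def triSub (k : ℕ) : Set (ℝ × ℝ) :=
  {p | p ∈ tri ∧ 1 - p.1 - (k : ℝ) * p.2 ≥ 0 ∧ 0 > 1 - p.1 - ((k : ℝ) + 1) * p.2}

/-- The index `k` with `(x,y) ∈ △_k`, i.e. `⌊(1-x)/y⌋`. -/
def triIndex (p : ℝ × ℝ) : ℤ := ⌊(1 - p.1) / p.2⌋

/-- The triangle map `T`, sending `(α, β) ∈ △_k` to `(β/α, (1 − α − kβ)/α)`. -/
def T (p : ℝ × ℝ) : ℝ × ℝ :=
  (p.2 / p.1, (1 - p.1 - (triIndex p : ℝ) * p.2) / p.1)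

/-- The vectors `C_k` (with indices shifted by 3):
`Cvec a 0 = C₋₃ = (1,0,0)ᵀ`, `Cvec a 1 = C₋₂ = (0,1,0)ᵀ`, `Cvec a 2 = C₋₁ = (0,0,1)ᵀ`,
and `Cvec a (k+3) = C_k = C_{k-3} - C_{k-2} - a_k C_{k-1}` for `k ≥ 0`. -/
def Cvec (a : ℕ → ℕ) : ℕ → Fin 3 → ℝ
  | 0 => ![1, 0, 0]
  | 1 => ![0, 1, 0]
  | 2 => ![0, 0, 1]
  | (n + 3) => Cvec a n - Cvec a (n + 1) - (a n : ℝ) • Cvec a (n + 2)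

/-- `d_k = (1, α, β) · C_k`, with the index shifted by 3: `dvec a α β (k+3) = d_k`. -/
def dvec (a : ℕ → ℕ) (α β : ℝ) (n : ℕ) : ℝ := ![1, α, β] ⬝ᵥ Cvec a n

/-- `X_n = C_n × C_{n+1}`, with the index shifted by 2: `Xvec a (n+2) = X_n`
(`X_n` is defined for `n ≥ -2`). -/
def Xvec (a : ℕ → ℕ) (n : ℕ) : Fin 3 → ℝ :=
  crossProduct (Cvec a (n + 1)) (Cvec a (n + 2))


/-! Write `dₙ = (1, α, β) · Cₙ`. Along the orbit, `Tⁿ(α, β) = (d_{n+1}/dₙ, d_{n+2}/dₙ)`, so a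
non-terminating triangle sequence forces every `dₙ > 0`. The word `A₁^{a₀}A₀ ⋯ A₁^{a_k}A₀`,
of length `N_k`, multiplies out to the matrix with columns `C_{k-2}, C_{k-1}, C_k`, so its
term in `Z_{N_k}` is `d_k^{-s}`. The first coordinates satisfy
`x_{n+1} = x_n + a_{n+1} x_{n-1} + x_{n-2}`, hence are nonnegative and make
`x_{k+1} d_k + (x_{k-1} + a_{k+2} x_k) d_{k+1} + x_k d_{k+2}` an invariant, equal to `1`;
so `x_{k+1} d_k ≤ 1`, i.e. `x_{k+1}^s ≤ d_k^{-s} ≤ Z_{N_k}`. -/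

section TriangleSequence

variable (a : ℕ → ℕ) (α β : ℝ)

lemma Cvec_add_three (n : ℕ) :
    Cvec a (n + 3) = Cvec a n - Cvec a (n + 1) - (a n : ℝ) • Cvec a (n + 2) := rfl

lemma dvec_add_three (n : ℕ) :
    dvec a α β (n + 3) = dvec a α β n - dvec a α β (n + 1) - a n * dvec a α β (n + 2) := by
  simp only [dvec, Cvec_add_three, dotProduct_sub, dotProduct_smul, smul_eq_mul]

lemma dvec_zero : dvec a α β 0 = 1 := by simp [dvec, Cvec]

lemma dvec_one : dvec a α β 1 = α := by simp [dvec, Cvec]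

lemma dvec_two : dvec a α β 2 = β := by simp [dvec, Cvec]

lemma Xvec_fst (n : ℕ) :
    Xvec a n 0 = Cvec a (n + 1) 1 * Cvec a (n + 2) 2 - Cvec a (n + 1) 2 * Cvec a (n + 2) 1 := by
  simp [Xvec, crossProduct]

lemma Xvec_fst_zero : Xvec a 0 0 = 1 := by simp [Xvec_fst, Cvec]

lemma Xvec_fst_one : Xvec a 1 0 = 1 := by simp [Xvec_fst, Cvec]

lemma Xvec_fst_two : Xvec a 2 0 = 1 + a 0 := by
  simp [Xvec_fst, Cvec]
  ring

lemma Xvec_fst_add_three (n : ℕ) :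
    Xvec a (n + 3) 0 = Xvec a (n + 2) 0 + a (n + 1) * Xvec a (n + 1) 0 + Xvec a n 0 := by
  simp only [Xvec_fst, show n + 3 + 2 = (n + 2) + 3 from rfl, show n + 3 + 1 = (n + 1) + 3 from rfl,
    Cvec_add_three a (n + 2), Cvec_add_three a (n + 1), Pi.sub_apply, Pi.smul_apply, smul_eq_mul]
  ring

lemma Xvec_fst_nonneg : ∀ n, 0 ≤ Xvec a n 0
  | 0 => by rw [Xvec_fst_zero]; exact zero_le_one
  | 1 => by rw [Xvec_fst_one]; exact zero_le_one
  | 2 => by rw [Xvec_fst_two]; positivity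
  | n + 3 => by
    rw [Xvec_fst_add_three]
    have := Xvec_fst_nonneg n
    have := Xvec_fst_nonneg (n + 1)
    have := Xvec_fst_nonneg (n + 2)
    positivity

lemma Xvec_fst_mul_dvec_invariant (m : ℕ) :
    Xvec a (m + 2) 0 * dvec a α β (m + 2)
      + (Xvec a m 0 + a (m + 1) * Xvec a (m + 1) 0) * dvec a α β (m + 3)
      + Xvec a (m + 1) 0 * dvec a α β (m + 4) = 1 := by
  induction m with
  | zero =>
    rw [Xvec_fst_zero, Xvec_fst_one, Xvec_fst_two, dvec_add_three a α β 1,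
      dvec_add_three a α β 0, dvec_zero, dvec_one, dvec_two]
    ring
  | succ m ih =>
    rw [Xvec_fst_add_three, dvec_add_three a α β (m + 2)]
    linear_combination ih

lemma triIndex_eq_of_mem_triSub {p : ℝ × ℝ} {k : ℕ} (hp : p ∈ triSub k) : triIndex p = k := by
  obtain ⟨⟨-, -, hy⟩, hk, hk'⟩ := hp
  rw [triIndex, Int.floor_eq_iff, Int.cast_natCast, le_div_iff₀ hy, div_lt_iff₀ hy]
  constructor <;> linarith

lemma T_div_of_mem_triSub {d₀ d₁ d₂ : ℝ} {k : ℕ} (h₀ : 0 < d₀) (h₁ : 0 < d₁)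
    (hp : (d₁ / d₀, d₂ / d₀) ∈ triSub k) :
    T (d₁ / d₀, d₂ / d₀) = (d₂ / d₁, (d₀ - d₁ - k * d₂) / d₁) := by
  rw [T, triIndex_eq_of_mem_triSub hp, Int.cast_natCast]
  ext <;> field_simp

lemma dvec_pos_and_iterate_T (hseq : ∀ n : ℕ, T^[n] (α, β) ∈ triSub (a n)) (n : ℕ) :
    0 < dvec a α β n ∧
      T^[n] (α, β) = (dvec a α β (n + 1) / dvec a α β n, dvec a α β (n + 2) / dvec a α β n) := by
  induction n with
  | zero => simp [dvec_zero, dvec_one, dvec_two]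
  | succ n ih =>
    obtain ⟨hd, horbit⟩ := ih
    have hmem := hseq n
    rw [horbit] at hmem
    have hd' : 0 < dvec a α β (n + 1) :=
      (div_pos_iff_of_pos_right hd).1 (hmem.1.2.2.trans_le hmem.1.2.1)
    refine ⟨hd', ?_⟩
    rw [Function.iterate_succ_apply', horbit, T_div_of_mem_triSub hd hd' hmem,
      dvec_add_three a α β n]

lemma dvec_pos (hseq : ∀ n : ℕ, T^[n] (α, β) ∈ triSub (a n)) (n : ℕ) : 0 < dvec a α β n :=
  (dvec_pos_and_iterate_T a α β hseq n).1

lemma Xvec_fst_mul_dvec_le_one (hseq : ∀ n : ℕ, T^[n] (α, β) ∈ triSub (a n)) (m : ℕ) :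
    Xvec a (m + 2) 0 * dvec a α β (m + 2) ≤ 1 := by
  have hP : 0 ≤ (Xvec a m 0 + a (m + 1) * Xvec a (m + 1) 0) * dvec a α β (m + 3) :=
    mul_nonneg (add_nonneg (Xvec_fst_nonneg a m)
      (mul_nonneg (Nat.cast_nonneg _) (Xvec_fst_nonneg a _))) (dvec_pos a α β hseq _).le
  have hQ : 0 ≤ Xvec a (m + 1) 0 * dvec a α β (m + 4) :=
    mul_nonneg (Xvec_fst_nonneg a _) (dvec_pos a α β hseq _).le
  linarith [Xvec_fst_mul_dvec_invariant a α β m]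

def Cmat (n : ℕ) : Matrix (Fin 3) (Fin 3) ℝ := Matrix.of fun i j => Cvec a (n + j) i

lemma Cmat_zero : Cmat a 0 = 1 := by
  ext i j
  fin_cases i <;> fin_cases j <;> simp [Cmat, Cvec]

lemma A1_pow (b : ℕ) : A1 ^ b = !![1, 0, 0; 0, 1, 0; -(b : ℝ), 0, 1] := by
  induction b with
  | zero => simp [Matrix.one_fin_three]
  | succ b ih =>
    rw [pow_succ, ih, A1]
    ext i j
    fin_cases i <;> fin_cases j <;> simp [Matrix.mul_apply, Fin.sum_univ_three]
    ring

lemma A1_pow_mul_A0 (b : ℕ) : A1 ^ b * A0 = !![0, 0, 1; 1, 0, -1; 0, 1, -(b : ℝ)] := by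
  rw [A1_pow, A0]
  ext i j
  fin_cases i <;> fin_cases j <;> simp [Matrix.mul_apply, Fin.sum_univ_three]

lemma Cmat_mul_A1_pow_mul_A0 (n : ℕ) : Cmat a n * (A1 ^ a n * A0) = Cmat a (n + 1) := by
  rw [A1_pow_mul_A0]
  ext i j
  fin_cases j <;> simp [Cmat, Matrix.mul_apply, Fin.sum_univ_three, Cvec_add_three a n, add_assoc]
  ring

def word : ℕ → List (Fin 2)
  | 0 => []
  | n + 1 => word n ++ (List.replicate (a n) 1 ++ [0])

lemma length_word (n : ℕ) : (word a n).length = (∑ j ∈ Finset.range n, a j) + n := by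
  induction n with
  | zero => rfl
  | succ n ih =>
    rw [word, List.length_append, ih, Finset.sum_range_succ, List.length_append,
      List.length_replicate, List.length_singleton]
    omega

lemma prod_map_Amat_word (n : ℕ) : ((word a n).map Amat).prod = Cmat a n := by
  induction n with
  | zero => exact (Cmat_zero a).symm
  | succ n ih =>
    rw [word, List.map_append, List.prod_append, ih, ← Cmat_mul_A1_pow_mul_A0]
    simp [List.prod_replicate, Amat]

lemma HS_Mmat_Cmat (n : ℕ) : HS (Mmat α β) (Cmat a n) = dvec a α β (n + 2) := by
  simp [HS, Mmat, Cmat, Matrix.trace, Fin.sum_univ_three, dvec, dotProduct, vecMul, add_assoc]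

end TriangleSequence

lemma AI_get (L : List (Fin 2)) : AI L.get = (L.map Amat).prod := by
  rw [AI, show (fun i => Amat (L.get i)) = Amat ∘ L.get from rfl, ← List.map_ofFn, List.ofFn_get]

lemma one_div_rpow_le_Z (α β s : ℝ) (L : List (Fin 2)) :
    1 / |HS (Mmat α β) (L.map Amat).prod| ^ s ≤ Z L.length α β s := by
  rw [← AI_get]
  exact Finset.single_le_sum (f := fun I : Fin L.length → Fin 2 => 1 / |HS (Mmat α β) (AI I)| ^ s)
    (fun _ _ => by positivity) (Finset.mem_univ _)

/-- If `(α, β) ∈ △` has non-terminating triangle sequence `(a₀, a₁, …)` and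
`N_k = a₀ + ⋯ + a_k + (k+1)`, then for every `s > 0` and `k ≥ 0`,
`Z_{N_k}(α, β, s) ≥ (x_{k+1})^s` (here `Xvec a (k+3) 0 = x_{k+1}`). -/
theorem Z_ge_x_pow (α β : ℝ) (a : ℕ → ℕ)
    (hseq : ∀ n : ℕ, T^[n] (α, β) ∈ triSub (a n)) :
    ∀ s : ℝ, 0 < s → ∀ k : ℕ,
      (Xvec a (k + 3) 0) ^ s ≤ Z ((∑ j ∈ Finset.range (k + 1), a j) + (k + 1)) α β s := by
  intro s hs k
  have hd : 0 < dvec a α β (k + 3) := dvec_pos a α β hseq (k + 3)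
  have hx : Xvec a (k + 3) 0 ≤ 1 / dvec a α β (k + 3) :=
    (le_div_iff₀ hd).2 (Xvec_fst_mul_dvec_le_one a α β hseq (k + 1))
  calc Xvec a (k + 3) 0 ^ s ≤ (1 / dvec a α β (k + 3)) ^ s :=
        Real.rpow_le_rpow (Xvec_fst_nonneg a _) hx hs.le
    _ = 1 / |HS (Mmat α β) ((word a (k + 1)).map Amat).prod| ^ s := by
        rw [prod_map_Amat_word, HS_Mmat_Cmat, abs_of_pos hd, Real.div_rpow zero_le_one hd.le,
          Real.one_rpow]
    _ ≤ Z (word a (k + 1)).length α β s := one_div_rpow_le_Z α β s _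
    _ = _ := by rw [length_word]

end
end
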